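/- Let (S,T) be a medium. For any token τ and any state S, exactly one of τ ∈ Ŝ and τ̃ ∈ Ŝ holds, where Ŝ is the content of S and τ̃ is the reverse of τ. Consequently, the contents of any two states are equinumerous: |Ŝ| = |V̂| for all states S, V. -/

import Mathlib

/-!
A concise message from `τ p` back to `p` (where `τ p ≠ p`), prefixed by `τ`, is closed, so by
[M2] it pairs `τ` with a reverse inside a consistent message: every token has a reverse in `T`
and is not its own reverse.

If `τ` and `τ̃` both lay in `Ŝ`, through concise messages `m` from `W` and `m'` from `W'`, then `m`,
the reverse of `m'` and a concise message from `W'` to `W` would form a closed message containing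
`τ` at least twice and `τ̃` at most once, so it could not be vacuous. Conversely, a concise
message from `τ p` to `S` either already contains `τ` or `τ̃`, or stays concise when `τ` is
prefixed to it. Finally `Ŝ ≃ V̂` keeps the common tokens and sends the others to their reverses.
-/

open scoped Classical symmDiff

universe u

namespace Media

variable {S : Type u}

/-- The state obtained by applying the message (string of tokens) `m` to the state `s`. -/
def apply (s : S) (m : List (S → S)) : S :=
  m.foldl (fun x τ => τ x) s

/-- The sequence of states `S₀ = s, S₁, …, Sₙ` produced by the message `m` from the state `s`. -/
def produced (s : S) (m : List (S → S)) : List S :=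
  m.scanl (fun x τ => τ x) s

/-- `τ'` is a reverse of the token `τ`. -/
def IsReverse (τ τ' : S → S) : Prop :=
  ∀ P Q : S, P ≠ Q → (τ P = Q ↔ τ' Q = P)

/-- The message `m` is stepwise effective for the state `s`. -/
def StepwiseEffective (s : S) (m : List (S → S)) : Prop :=
  List.Chain' (· ≠ ·) (produced s m)

/-- The message `m` is consistent: it does not contain both a token and its reverse. -/
def Consistent (m : List (S → S)) : Prop :=
  ∀ τ ∈ m, ∀ τ' ∈ m, ¬ IsReverse τ τ'

/-- The message `m` is concise for the state `s`. -/
def Concise (s : S) (m : List (S → S)) : Prop :=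
  StepwiseEffective s m ∧ Consistent m ∧ m.Nodup

/-- The message `m` is vacuous: its indices can be partitioned into pairs of
mutually reverse tokens. -/
def Vacuous (m : List (S → S)) : Prop :=
  ∃ f : Fin m.length → Fin m.length, Function.Involutive f ∧
    (∀ i, f i ≠ i) ∧ ∀ i, IsReverse (m.get i) (m.get (f i))

/-- The message `m` is closed for the state `s`. -/
def Closed (s : S) (m : List (S → S)) : Prop :=
  StepwiseEffective s m ∧ apply s m = s

/-- `(S, T)` is a medium: a token system satisfying axioms [M1] and [M2]. -/
def IsMedium (T : Set (S → S)) : Prop :=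
  (∃ a b : S, a ≠ b) ∧ T.Nonempty ∧ (∀ τ ∈ T, τ ≠ id) ∧
  (∀ P Q : S, P ≠ Q →
    ∃ m : List (S → S), (∀ τ ∈ m, τ ∈ T) ∧ Concise P m ∧ apply P m = Q) ∧
  (∀ (P : S) (m : List (S → S)), (∀ τ ∈ m, τ ∈ T) → Closed P m → Vacuous m)

end Media

namespace Media

variable {S : Type u}

/-- The content of a state: all tokens occurring in at least one concise message
producing that state. -/
def stateContent (T : Set (S → S)) (s : S) : Set (S → S) :=
  {τ | ∃ (W : S) (m : List (S → S)),
    (∀ σ ∈ m, σ ∈ T) ∧ Concise W m ∧ apply W m = s ∧ τ ∈ m}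

end Media

namespace Media

theorem nonempty_equiv_of_xor_mem {α : Type*} {U A B : Set α} {r : α → α}
    (hr : ∀ x ∈ U, r (r x) = x) (hA : A ⊆ U) (hB : B ⊆ U)
    (hxA : ∀ x ∈ U, Xor (x ∈ A) (r x ∈ A)) (hxB : ∀ x ∈ U, Xor (x ∈ B) (r x ∈ B)) :
    Nonempty (A ≃ B) := by
  have mapsTo {A B : Set α} (hA : A ⊆ U) (hxB : ∀ x ∈ U, Xor (x ∈ B) (r x ∈ B)) :
      Set.MapsTo (fun x => if x ∈ B then x else r x) A B := by
    intro x hx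
    by_cases hxB' : x ∈ B
    · simp [hxB']
    · simpa [hxB'] using (hxB x (hA hx)).or.resolve_left hxB'
  have leftInvOn {A B : Set α} (hA : A ⊆ U) (hxA : ∀ x ∈ U, Xor (x ∈ A) (r x ∈ A)) :
      Set.LeftInvOn (fun x => if x ∈ A then x else r x) (fun x => if x ∈ B then x else r x) A := by
    intro x hx
    by_cases hxB' : x ∈ B
    · simp [hxB', hx]
    · have hrx : r x ∉ A := fun h => (xor_iff_or_and_not_and _ _).mp (hxA x (hA hx)) |>.2 ⟨hx, h⟩
      simp [hxB', hrx, hr x (hA hx)]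
  exact ⟨(Set.InvOn.bijOn ⟨leftInvOn hA hxA, leftInvOn hB hxB⟩ (mapsTo hA hxB)
    (mapsTo hB hxA)).equiv _⟩

variable {S : Type u}

@[simp]
theorem apply_nil (s : S) : apply s [] = s := rfl

@[simp]
theorem apply_cons (s : S) (τ : S → S) (m : List (S → S)) :
    apply s (τ :: m) = apply (τ s) m := rfl

@[simp]
theorem apply_append (s : S) (m₁ m₂ : List (S → S)) :
    apply s (m₁ ++ m₂) = apply (apply s m₁) m₂ :=
  List.foldl_append

theorem stepwiseEffective_nil (s : S) : StepwiseEffective s [] :=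
  List.isChain_singleton s

theorem stepwiseEffective_cons {s : S} {τ : S → S} {m : List (S → S)} :
    StepwiseEffective s (τ :: m) ↔ s ≠ τ s ∧ StepwiseEffective (τ s) m := by
  simp only [StepwiseEffective, produced]
  cases m <;> simp only [List.scanl_nil, List.scanl_cons] <;> exact List.isChain_cons_cons

theorem stepwiseEffective_append {s : S} {m₁ m₂ : List (S → S)} :
    StepwiseEffective s (m₁ ++ m₂) ↔
      StepwiseEffective s m₁ ∧ StepwiseEffective (apply s m₁) m₂ := by
  induction m₁ generalizing s with
  | nil => simp [stepwiseEffective_nil]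
  | cons τ m ih => simp [stepwiseEffective_cons, ih, and_assoc]

theorem concise_nil (s : S) : Concise s [] :=
  ⟨stepwiseEffective_nil s, by simp [Consistent], List.nodup_nil⟩

theorem IsReverse.symm {τ σ : S → S} (h : IsReverse τ σ) : IsReverse σ τ :=
  fun P Q hPQ => (h Q P hPQ.symm).symm

theorem IsReverse.unique {τ σ₁ σ₂ : S → S} (h₁ : IsReverse τ σ₁) (h₂ : IsReverse τ σ₂) :
    σ₁ = σ₂ := by
  have key {σ σ' : S → S} (h : IsReverse τ σ) (h' : IsReverse τ σ') {Q : S} (hQ : σ Q ≠ Q) :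
      σ' Q = σ Q :=
    (h' _ _ hQ).mp ((h _ _ hQ).mpr rfl)
  funext Q
  by_cases hQ₁ : σ₁ Q = Q
  · by_cases hQ₂ : σ₂ Q = Q
    · rw [hQ₁, hQ₂]
    · exact key h₂ h₁ hQ₂
  · exact (key h₁ h₂ hQ₁).symm

theorem Concise.cons {P : S} {τ τ' : S → S} {m : List (S → S)} (hm : Concise (τ P) m)
    (hP : P ≠ τ P) (hττ : ¬ IsReverse τ τ) (hτ' : IsReverse τ τ') (hτm : τ ∉ m)
    (hτ'm : τ' ∉ m) : Concise P (τ :: m) := by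
  obtain ⟨hSE, hcons, hnodup⟩ := hm
  refine ⟨stepwiseEffective_cons.mpr ⟨hP, hSE⟩, ?_, List.nodup_cons.mpr ⟨hτm, hnodup⟩⟩
  rintro a (_ | ⟨_, ha⟩) b (_ | ⟨_, hb⟩) hab
  · exact hττ hab
  · exact hτ'm (IsReverse.unique hab hτ' ▸ hb)
  · exact hτ'm (IsReverse.unique (IsReverse.symm hab) hτ' ▸ ha)
  · exact hcons a ha b hb hab

theorem Vacuous.count_eq {c : List (S → S)} (hc : Vacuous c) {τ τ' : S → S}
    (h : IsReverse τ τ') : c.count τ = c.count τ' := by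
  obtain ⟨f, hf, -, hrev⟩ := hc
  have hcount (σ : S → S) : c.count σ = (Finset.univ.filter fun i => c.get i = σ).card :=
    (Fin.card_filter_univ_eq_vector_get_eq_count σ ⟨c, rfl⟩).symm
  rw [hcount, hcount]
  refine Finset.card_bij' (fun i _ => f i) (fun i _ => f i) ?_ ?_ (fun i _ => hf i)
    (fun i _ => hf i)
  · simp only [Finset.mem_filter, Finset.mem_univ, true_and]
    intro i hi
    exact (hi ▸ hrev i).unique h
  · simp only [Finset.mem_filter, Finset.mem_univ, true_and]
    intro i hi
    exact (hi ▸ hrev i).unique h.symm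

theorem Vacuous.exists_mem_isReverse_of_cons {τ : S → S} {m : List (S → S)}
    (hv : Vacuous (τ :: m)) : ∃ σ ∈ m, IsReverse τ σ := by
  obtain ⟨f, -, hf, hrev⟩ := hv
  obtain ⟨k, hk⟩ := Fin.exists_succ_eq.mpr (hf 0)
  exact ⟨m.get k, List.get_mem m k, by simpa [← hk] using hrev 0⟩

/-- The paper's `τ̃`, with the junk value `τ` when `τ` has no reverse. -/
noncomputable def rev (τ : S → S) : S → S :=
  if h : ∃ σ, IsReverse τ σ then h.choose else τ

theorem IsReverse.rev_eq {τ σ : S → S} (h : IsReverse τ σ) : rev τ = σ := by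
  have hτ : ∃ σ, IsReverse τ σ := ⟨σ, h⟩
  rw [rev, dif_pos hτ]
  exact hτ.choose_spec.unique h

theorem rev_eq_iff {τ τ' σ : S → S} (h : IsReverse τ τ') (hσ : IsReverse σ (rev σ)) :
    rev σ = τ ↔ σ = τ' := by
  constructor
  · intro hστ
    exact (hστ ▸ hσ).symm.unique h
  · rintro rfl
    exact h.symm.rev_eq

noncomputable def reverseMessage (m : List (S → S)) : List (S → S) :=
  (m.map rev).reverse

@[simp]
theorem reverseMessage_cons (τ : S → S) (m : List (S → S)) :
    reverseMessage (τ :: m) = reverseMessage m ++ [rev τ] := by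
  simp [reverseMessage]

theorem StepwiseEffective.reverseMessage {W : S} {m : List (S → S)}
    (hm : ∀ σ ∈ m, IsReverse σ (rev σ)) (h : StepwiseEffective W m) :
    StepwiseEffective (apply W m) (reverseMessage m) ∧
      apply (apply W m) (reverseMessage m) = W := by
  induction m generalizing W with
  | nil => exact ⟨stepwiseEffective_nil W, rfl⟩
  | cons τ m ih =>
    obtain ⟨hW, hSE⟩ := stepwiseEffective_cons.mp h
    obtain ⟨ihSE, ih⟩ := ih (fun σ hσ => hm σ (List.mem_cons_of_mem τ hσ)) hSE
    have hback : rev τ (τ W) = W := (hm τ List.mem_cons_self W (τ W) hW).mp rfl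
    refine ⟨?_, by simp [ih, hback]⟩
    simp only [apply_cons, reverseMessage_cons, stepwiseEffective_append, ih,
      stepwiseEffective_cons]
    exact ⟨ihSE, by rwa [hback, ne_comm], stepwiseEffective_nil _⟩

theorem count_reverseMessage {τ τ' : S → S} {m : List (S → S)}
    (hm : ∀ σ ∈ m, IsReverse σ (rev σ)) (h : IsReverse τ τ') :
    (reverseMessage m).count τ = m.count τ' := by
  rw [reverseMessage, List.count_reverse, List.count, List.count, List.countP_map]
  refine List.countP_congr fun σ hσ => ?_
  simpa using rev_eq_iff h (hm σ hσ)

variable {T : Set (S → S)}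

theorem IsMedium.exists_concise (hM : IsMedium T) (P Q : S) :
    ∃ m : List (S → S), (∀ σ ∈ m, σ ∈ T) ∧ Concise P m ∧ apply P m = Q := by
  rcases eq_or_ne P Q with rfl | hPQ
  · exact ⟨[], by simp, concise_nil P, rfl⟩
  · exact hM.2.2.2.1 P Q hPQ

theorem IsMedium.vacuous_of_closed (hM : IsMedium T) {P : S} {m : List (S → S)}
    (hm : ∀ σ ∈ m, σ ∈ T) (h : Closed P m) : Vacuous m :=
  hM.2.2.2.2 P m hm h

theorem IsMedium.exists_ne_apply (hM : IsMedium T) {τ : S → S} (hτ : τ ∈ T) :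
    ∃ p, p ≠ τ p := by
  by_contra! h
  exact hM.2.2.1 τ hτ (funext fun p => (h p).symm)

theorem IsMedium.exists_consistent_mem_isReverse (hM : IsMedium T) {τ : S → S} (hτ : τ ∈ T) :
    ∃ m : List (S → S), (∀ σ ∈ m, σ ∈ T) ∧ Consistent m ∧ ∃ σ ∈ m, IsReverse τ σ := by
  obtain ⟨p, hp⟩ := hM.exists_ne_apply hτ
  obtain ⟨m, hmT, ⟨hSE, hcons, -⟩, hm⟩ := hM.exists_concise (τ p) p
  have hclosed : Closed p (τ :: m) := ⟨stepwiseEffective_cons.mpr ⟨hp, hSE⟩, hm⟩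
  have hτmT : ∀ σ ∈ τ :: m, σ ∈ T := List.forall_mem_cons.mpr ⟨hτ, hmT⟩
  exact ⟨m, hmT, hcons, (hM.vacuous_of_closed hτmT hclosed).exists_mem_isReverse_of_cons⟩

theorem IsMedium.isReverse_rev (hM : IsMedium T) {τ : S → S} (hτ : τ ∈ T) :
    IsReverse τ (rev τ) := by
  obtain ⟨-, -, -, σ, -, hσ⟩ := hM.exists_consistent_mem_isReverse hτ
  exact hσ.rev_eq ▸ hσ

theorem IsMedium.rev_mem (hM : IsMedium T) {τ : S → S} (hτ : τ ∈ T) : rev τ ∈ T := by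
  obtain ⟨m, hmT, -, σ, hσm, hσ⟩ := hM.exists_consistent_mem_isReverse hτ
  exact hσ.rev_eq ▸ hmT σ hσm

theorem IsMedium.rev_rev (hM : IsMedium T) {τ : S → S} (hτ : τ ∈ T) : rev (rev τ) = τ :=
  (hM.isReverse_rev hτ).symm.rev_eq

theorem IsMedium.not_isReverse_self (hM : IsMedium T) {τ : S → S} (hτ : τ ∈ T) :
    ¬ IsReverse τ τ := by
  intro hττ
  obtain ⟨m, -, hcons, σ, hσm, hσ⟩ := hM.exists_consistent_mem_isReverse hτ
  obtain rfl := hσ.unique hττ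
  exact hcons σ hσm σ hσm hττ

theorem stateContent_subset (T : Set (S → S)) (s : S) : stateContent T s ⊆ T := by
  rintro τ ⟨-, m, hmT, -, -, hτm⟩
  exact hmT τ hτm

theorem IsMedium.mem_stateContent_or (hM : IsMedium T) {τ τ' : S → S} (hτ : τ ∈ T)
    (h : IsReverse τ τ') (s : S) : τ ∈ stateContent T s ∨ τ' ∈ stateContent T s := by
  obtain ⟨p, hp⟩ := hM.exists_ne_apply hτ
  obtain ⟨m, hmT, hm, hms⟩ := hM.exists_concise (τ p) s
  by_cases hτm : τ ∈ m
  · exact .inl ⟨τ p, m, hmT, hm, hms, hτm⟩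
  by_cases hτ'm : τ' ∈ m
  · exact .inr ⟨τ p, m, hmT, hm, hms, hτ'm⟩
  exact .inl ⟨p, τ :: m, List.forall_mem_cons.mpr ⟨hτ, hmT⟩,
    hm.cons hp (hM.not_isReverse_self hτ) h hτm hτ'm, hms, List.mem_cons_self⟩

theorem IsMedium.not_mem_stateContent_and (hM : IsMedium T) {τ τ' : S → S}
    (h : IsReverse τ τ') (s : S) : ¬ (τ ∈ stateContent T s ∧ τ' ∈ stateContent T s) := by
  rintro ⟨⟨W, m, hmT, ⟨hmSE, hmcons, -⟩, rfl, hτm⟩,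
    ⟨W', m', hm'T, ⟨hm'SE, hm'cons, -⟩, hm', hτ'm'⟩⟩
  obtain ⟨n, hnT, ⟨hnSE, -, hnnodup⟩, hn⟩ := hM.exists_concise W' W
  have hm'rev : ∀ σ ∈ m', IsReverse σ (rev σ) := fun σ hσ => hM.isReverse_rev (hm'T σ hσ)
  obtain ⟨hrSE, hr⟩ := hm'SE.reverseMessage hm'rev
  rw [hm'] at hrSE hr
  set c := m ++ (reverseMessage m' ++ n)
  have hcT : ∀ σ ∈ c, σ ∈ T := by
    simp only [c, reverseMessage, List.mem_append, List.mem_reverse, List.mem_map]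
    rintro σ (hσ | ⟨ρ, hρ, rfl⟩ | hσ)
    exacts [hmT σ hσ, hM.rev_mem (hm'T ρ hρ), hnT σ hσ]
  have hclosed : Closed W c := by
    refine ⟨?_, by simp [c, hr, hn]⟩
    simp only [c, stepwiseEffective_append, hr]
    exact ⟨hmSE, hrSE, hnSE⟩
  have hcount := (hM.vacuous_of_closed hcT hclosed).count_eq h
  simp only [c, List.count_append, count_reverseMessage hm'rev h,
    count_reverseMessage hm'rev h.symm] at hcount
  have hτm_pos : 0 < m.count τ := List.count_pos_iff.mpr hτm
  have hτ'm'_pos : 0 < m'.count τ' := List.count_pos_iff.mpr hτ'm'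
  have hτ'm_zero : m.count τ' = 0 := List.count_eq_zero.mpr fun hτ'm => hmcons τ hτm τ' hτ'm h
  have hτm'_zero : m'.count τ = 0 :=
    List.count_eq_zero.mpr fun hτm' => hm'cons τ hτm' τ' hτ'm' h
  have hτ'n : n.count τ' ≤ 1 := List.nodup_iff_count_le_one.mp hnnodup τ'
  omega

theorem IsMedium.xor_mem_stateContent (hM : IsMedium T) {τ τ' : S → S} (hτ : τ ∈ T)
    (h : IsReverse τ τ') (s : S) : Xor (τ ∈ stateContent T s) (τ' ∈ stateContent T s) :=
  (xor_iff_or_and_not_and _ _).mpr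
    ⟨hM.mem_stateContent_or hτ h s, hM.not_mem_stateContent_and h s⟩

end Media

open Media

/-- Theorem 8.1: for any token `τ` (with reverse `τ'`) and any state `s` of a
medium, exactly one of `τ ∈ ŝ` and `τ' ∈ ŝ` holds. Consequently, the contents
of any two states are equinumerous. -/
theorem token_xor_reverse_in_content {S : Type u} {T : Set (S → S)}
    (hM : IsMedium T) :
    (∀ τ ∈ T, ∀ τ' ∈ T, IsReverse τ τ' → ∀ s : S,
      Xor' (τ ∈ stateContent T s) (τ' ∈ stateContent T s)) ∧
    (∀ s v : S, Nonempty (↥(stateContent T s) ≃ ↥(stateContent T v))) := by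
  refine ⟨fun τ hτ τ' _ h s => hM.xor_mem_stateContent hτ h s, fun s v => ?_⟩
  have hxor (s : S) : ∀ τ ∈ T, Xor (τ ∈ stateContent T s) (rev τ ∈ stateContent T s) :=
    fun τ hτ => hM.xor_mem_stateContent hτ (hM.isReverse_rev hτ) s
  exact nonempty_equiv_of_xor_mem (fun τ hτ => hM.rev_rev hτ) (stateContent_subset T s)
    (stateContent_subset T v) (hxor s) (hxor v)
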